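/- Let N ≥ 1 and let d, d' ∈ 𝔽₂^N be two rule vectors of length N. If the associated LHCA characteristic polynomials agree, Δ_{N-1}(d) = Δ_{N-1}(d'), and the characteristic subpolynomials agree, Δ_{N-2}(d) = Δ_{N-2}(d'), then d = d'. That is, the pair (Δ_{N-1}, Δ_{N-2}) uniquely determines the LHCA. -/
import Mathlib


open Polynomial
open Matrix

/-- Transition matrix of a null-boundary linear hybrid CA over 𝔽₂ with rule
vector `d`: tridiagonal, diagonal entries `d i`, sub/super-diagonal entries 1. -/
def lhcaMatrix (N : ℕ) (d : Fin N → ZMod 2) : Matrix (Fin N) (Fin N) (ZMod 2) :=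
  Matrix.of fun i j =>
    if i = j then d i
    else if (i : ℕ) + 1 = (j : ℕ) ∨ (j : ℕ) + 1 = (i : ℕ) then 1 else 0

/-- Characteristic polynomial of the LHCA transition matrix. -/
noncomputable def lhcaCharPoly (N : ℕ) (d : Fin N → ZMod 2) : Polynomial (ZMod 2) :=
  (lhcaMatrix N d).charpoly

lemma lhca_submatrix (n : ℕ) (d : Fin (n+1) → ZMod 2) :
    (charmatrix (lhcaMatrix (n+1) d)).submatrix Fin.castSucc Fin.castSucc =
    charmatrix (lhcaMatrix n (fun i => d i.castSucc)) := by
  ext i j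
  by_cases h : i = j
  · subst h
    simp [charmatrix_apply, lhcaMatrix, Matrix.diagonal_apply]
  · have h2 : i.castSucc ≠ j.castSucc := by simpa [Fin.castSucc_inj] using h
    simp [charmatrix_apply, lhcaMatrix, Matrix.diagonal_apply, h, h2]

lemma neg_one_eq : (-1 : Polynomial (ZMod 2)) = 1 := by
  have := CharTwo.neg_eq (R := Polynomial (ZMod 2)) 1
  simpa using this


lemma lhca_minor (n : ℕ) (d : Fin (n+2) → ZMod 2) :
    ((charmatrix (lhcaMatrix (n+2) d)).submatrix (Fin.last (n+1)).succAbove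
        ((Fin.last n).castSucc : Fin (n+2)).succAbove).det =
      lhcaCharPoly n (fun i => d i.castSucc.castSucc) := by
  set A := charmatrix (lhcaMatrix (n+2) d) with hA
  set g : Fin (n+1) → Fin (n+2) := ((Fin.last n).castSucc : Fin (n+2)).succAbove with hg
  rw [Fin.succAbove_last]
  rw [Matrix.det_succ_column _ (Fin.last n), Fin.sum_univ_castSucc]
  have hglast : g (Fin.last n) = Fin.last (n+1) := by
    rw [hg, Fin.succAbove_of_le_castSucc]
    · rfl
    · exact le_refl _
  have hgcs : ∀ k : Fin n, g k.castSucc = k.castSucc.castSucc := by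
    intro k
    rw [hg, Fin.succAbove_of_castSucc_lt]
    exact k.isLt
  have hzero : ∑ i : Fin n, (-1 : Polynomial (ZMod 2)) ^ ((i.castSucc : ℕ) + (Fin.last n : ℕ))
      * (A.submatrix Fin.castSucc g) i.castSucc (Fin.last n)
      * ((A.submatrix Fin.castSucc g).submatrix i.castSucc.succAbove (Fin.last n).succAbove).det = 0 := by
    refine Finset.sum_eq_zero fun i _ => ?_
    have hij : (i.castSucc.castSucc : Fin (n+2)) ≠ g (Fin.last n) := by
      rw [hglast]; simp only [ne_eq, Fin.ext_iff, Fin.coe_castSucc, Fin.val_last]; omega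
    have h2 : (A.submatrix Fin.castSucc g) i.castSucc (Fin.last n) = 0 := by
      rw [Matrix.submatrix_apply, hA, charmatrix_apply_ne _ _ _ hij]
      have : lhcaMatrix (n+2) d i.castSucc.castSucc (g (Fin.last n)) = 0 := by
        rw [hglast]
        have hi := i.isLt
        simp only [lhcaMatrix, Matrix.of_apply, Fin.ext_iff, Fin.coe_castSucc, Fin.val_last]
        rw [if_neg (by omega), if_neg (by omega)]
      rw [this]; simp
    rw [h2]; ring
  rw [hzero, zero_add]
  have hentry : (A.submatrix Fin.castSucc g) (Fin.last n) (Fin.last n) = 1 := by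
    rw [Matrix.submatrix_apply, hglast, hA]
    have hne : ((Fin.last n).castSucc : Fin (n+2)) ≠ Fin.last (n+1) := by
      simp only [ne_eq, Fin.ext_iff, Fin.coe_castSucc, Fin.val_last]; omega
    rw [charmatrix_apply_ne _ _ _ hne]
    have : lhcaMatrix (n+2) d (Fin.last n).castSucc (Fin.last (n+1)) = 1 := by
      have hor : ((((Fin.last n).castSucc : Fin (n+2))) : ℕ) + 1 = ((Fin.last (n+1)) : ℕ) ∨
          ((Fin.last (n+1)) : ℕ) + 1 = ((((Fin.last n).castSucc : Fin (n+2))) : ℕ) :=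
        Or.inl (by simp)
      simp only [lhcaMatrix, Matrix.of_apply, if_neg hne, if_pos hor]
    rw [this]
    simpa using neg_one_eq
  rw [hentry]
  have hsub : (A.submatrix Fin.castSucc g).submatrix (Fin.last n).succAbove (Fin.last n).succAbove
      = charmatrix (lhcaMatrix n (fun i => d i.castSucc.castSucc)) := by
    rw [Fin.succAbove_last, Matrix.submatrix_submatrix]
    have hgc : g ∘ Fin.castSucc = Fin.castSucc ∘ Fin.castSucc := funext hgcs
    rw [hgc]
    have : (Fin.castSucc ∘ Fin.castSucc : Fin n → Fin (n+2)) = Fin.castSucc ∘ Fin.castSucc := rfl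
    calc A.submatrix (Fin.castSucc ∘ Fin.castSucc) (Fin.castSucc ∘ Fin.castSucc)
        = (A.submatrix Fin.castSucc Fin.castSucc).submatrix Fin.castSucc Fin.castSucc := by
          rw [Matrix.submatrix_submatrix]
      _ = charmatrix (lhcaMatrix n (fun i => d i.castSucc.castSucc)) := by
          rw [hA, lhca_submatrix, lhca_submatrix]
  rw [hsub]
  have hsign : (-1 : Polynomial (ZMod 2)) ^ ((Fin.last n : ℕ) + (Fin.last n : ℕ)) = 1 := by
    rw [neg_one_eq, one_pow]
  rw [hsign, one_mul, one_mul]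
  rfl

lemma lhca_rec (n : ℕ) (d : Fin (n+2) → ZMod 2) :
    lhcaCharPoly (n+2) d =
      (X + C (d (Fin.last (n+1)))) * lhcaCharPoly (n+1) (fun i => d i.castSucc)
        + lhcaCharPoly n (fun i => d i.castSucc.castSucc) := by
  set A := charmatrix (lhcaMatrix (n+2) d) with hA
  have hdet : lhcaCharPoly (n+2) d = A.det := rfl
  rw [hdet, Matrix.det_succ_row A (Fin.last (n+1))]
  rw [Fin.sum_univ_castSucc, Fin.sum_univ_castSucc]
  have hsum0 : ∑ j : Fin n, (-1 : Polynomial (ZMod 2)) ^ ((Fin.last (n+1) : ℕ) + ((j.castSucc.castSucc : Fin (n+2)) : ℕ))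
      * A (Fin.last (n+1)) j.castSucc.castSucc
      * (A.submatrix (Fin.last (n+1)).succAbove (j.castSucc.castSucc).succAbove).det = 0 := by
    refine Finset.sum_eq_zero fun j _ => ?_
    have h1 : Fin.last (n+1) ≠ j.castSucc.castSucc := by
      simp [Fin.ext_iff]; omega
    have h2 : A (Fin.last (n+1)) j.castSucc.castSucc = 0 := by
      rw [hA, charmatrix_apply_ne _ _ _ h1]
      have : lhcaMatrix (n+2) d (Fin.last (n+1)) j.castSucc.castSucc = 0 := by
        simp [lhcaMatrix, h1, Fin.ext_iff, Fin.coe_castSucc, Fin.val_last]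
        have hj := j.isLt
        rw [if_neg (by omega), if_neg (by omega)]
      rw [this]; simp
    rw [h2]; ring
  rw [hsum0]
  have e1 : A (Fin.last (n+1)) (Fin.last (n+1)) = X + C (d (Fin.last (n+1))) := by
    rw [hA, charmatrix_apply_eq]
    have : lhcaMatrix (n+2) d (Fin.last (n+1)) (Fin.last (n+1)) = d (Fin.last (n+1)) := by
      simp [lhcaMatrix]
    rw [this, CharTwo.sub_eq_add]
  have e2 : A (Fin.last (n+1)) ((Fin.last n).castSucc : Fin (n+2)) = 1 := by
    rw [hA]
    have hne : Fin.last (n+1) ≠ ((Fin.last n).castSucc : Fin (n+2)) := by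
      simp only [ne_eq, Fin.ext_iff, Fin.coe_castSucc, Fin.val_last]; omega
    rw [charmatrix_apply_ne _ _ _ hne]
    have hor : ((Fin.last (n+1)) : ℕ) + 1 = ((((Fin.last n).castSucc : Fin (n+2))) : ℕ) ∨
        ((((Fin.last n).castSucc : Fin (n+2))) : ℕ) + 1 = ((Fin.last (n+1)) : ℕ) :=
      Or.inr (by simp)
    simp only [lhcaMatrix, Matrix.of_apply, if_neg hne, if_pos hor]
    simpa using neg_one_eq
  have e3 : (A.submatrix (Fin.last (n+1)).succAbove (Fin.last (n+1)).succAbove).det =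
      lhcaCharPoly (n+1) (fun i => d i.castSucc) := by
    rw [Fin.succAbove_last, hA, lhca_submatrix]
    rfl
  have e4 := lhca_minor n d
  rw [e1, e2, e3]
  rw [show (A.submatrix (Fin.last (n+1)).succAbove ((Fin.last n).castSucc : Fin (n+2)).succAbove).det
      = lhcaCharPoly n (fun i => d i.castSucc.castSucc) from e4]
  rw [neg_one_eq, one_pow, one_pow]
  ring

lemma lhca_one (d : Fin 1 → ZMod 2) : lhcaCharPoly 1 d = X + C (d 0) := by
  simp [lhcaCharPoly, Matrix.charpoly, Matrix.det_fin_one, charmatrix_apply,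
    Matrix.diagonal_apply, CharTwo.sub_eq_add, lhcaMatrix]

lemma lhca_natDegree (n : ℕ) (d : Fin n → ZMod 2) : (lhcaCharPoly n d).natDegree = n := by
  rw [lhcaCharPoly, Matrix.charpoly_natDegree_eq_dim, Fintype.card_fin]

lemma lhca_aux : ∀ N : ℕ, ∀ d d' : Fin N → ZMod 2,
    lhcaCharPoly N d = lhcaCharPoly N d' →
    lhcaCharPoly (N - 1) (fun i => d (Fin.castLE (Nat.sub_le N 1) i)) =
      lhcaCharPoly (N - 1) (fun i => d' (Fin.castLE (Nat.sub_le N 1) i)) →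
    d = d' := by
  intro N
  induction N using Nat.strong_induction_on with
  | _ N ih =>
    match N, ih with
    | 0, _ =>
      intro d d' _ _
      funext i; exact absurd i.isLt (by omega)
    | 1, _ =>
      intro d d' h1 _
      rw [lhca_one, lhca_one] at h1
      have h0 : d 0 = d' 0 := C_injective (by exact add_left_cancel h1)
      funext i
      rw [Subsingleton.elim i 0, h0]
    | (n+2), ih =>
      intro d d' h1 h2
      have hP : lhcaCharPoly (n+1) (fun i => d i.castSucc) =
          lhcaCharPoly (n+1) (fun i => d' i.castSucc) := h2
      rw [lhca_rec n d, lhca_rec n d', ← hP] at h1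
      set a := d (Fin.last (n+1)) with ha
      set a' := d' (Fin.last (n+1)) with ha'
      set P := lhcaCharPoly (n+1) (fun i => d i.castSucc) with hPdef
      set Q := lhcaCharPoly n (fun i => d i.castSucc.castSucc) with hQdef
      set Q' := lhcaCharPoly n (fun i => d' i.castSucc.castSucc) with hQ'def
      have key : (C (a + a')) * P = Q' + Q := by
        have h4 : (C a - C a') * P = Q' - Q := by linear_combination h1
        rwa [CharTwo.sub_eq_add, CharTwo.sub_eq_add, ← C_add] at h4
      have haa : a = a' := by
        by_contra hne
        have huniv : ∀ x y : ZMod 2, x ≠ y → x + y = 1 := by decide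
        have h01 : a + a' = 1 := huniv a a' hne
        rw [h01, C_1, one_mul] at key
        have hdP : P.natDegree = n + 1 := lhca_natDegree _ _
        have dQ : Q.natDegree = n := lhca_natDegree _ _
        have dQ' : Q'.natDegree = n := lhca_natDegree _ _
        have hdQ : (Q' + Q).natDegree ≤ n := by
          refine le_trans (natDegree_add_le _ _) ?_
          rw [dQ, dQ']
          omega
        rw [key] at hdP
        omega
      have hQQ : Q = Q' := by
        rw [haa] at key
        have hz : (a' + a' : ZMod 2) = 0 := CharTwo.add_self_eq_zero a'
        rw [hz, C_0, zero_mul] at key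
        have h5 : Q' + Q + Q = Q := by rw [← key]; ring
        rw [add_assoc, CharTwo.add_self_eq_zero, add_zero] at h5
        exact h5.symm
      have hpre : (fun i => d i.castSucc) = (fun i : Fin (n+1) => d' i.castSucc) :=
        ih (n+1) (by omega) _ _ hP hQQ
      funext i
      cases i using Fin.lastCases with
      | last => exact haa
      | cast j => exact congrFun hpre j


/-- The pair consisting of the characteristic polynomial `Δ_{N-1}` and the
characteristic subpolynomial `Δ_{N-2}` (the latter being `Δ_{-1} = 1` when
`N = 1`, the characteristic polynomial of the empty submatrix) uniquely
determines the rule vector of an LHCA. -/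
theorem lhca_determined_by_two_charpolys (N : ℕ) (hN : 1 ≤ N)
    (d d' : Fin N → ZMod 2)
    (h1 : lhcaCharPoly N d = lhcaCharPoly N d')
    (h2 : lhcaCharPoly (N - 1) (fun i => d (Fin.castLE (by omega) i)) =
          lhcaCharPoly (N - 1) (fun i => d' (Fin.castLE (by omega) i))) :
    d = d' := lhca_aux N d d' h1 h2
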